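/- Let a and d be positive integers such that a does not divide 2d. Let G : ℂ → M₂(ℝ) be a C^∞ function taking symmetric matrix values and satisfying G(e^{iaθ}z) = R(dθ)·G(z)·R(dθ)ᵀ for all θ ∈ ℝ and z ∈ ℂ. Then there exists a C^∞ function ψ : ℝ → ℝ such that G(z) = ψ(|z|²)·Id for all z ∈ ℂ; in particular G(z)₁₂ = 0 and G(z)₁₁ = G(z)₂₂ for all z. -/

import Mathlib

open Matrix

/-- The 2×2 rotation matrix `R(θ)`. -/
noncomputable def rotMat (θ : ℝ) : Matrix (Fin 2) (Fin 2) ℝ :=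
  !![Real.cos θ, -Real.sin θ; Real.sin θ, Real.cos θ]

/-!
For `θ = 2π/a` the equivariance fixes `z` and conjugates `G z` by the rotation of angle `2πd/a`,
which is not a multiple of `π` because `a ∤ 2d`; a symmetric `2 × 2` matrix commuting with such a
rotation is scalar. Hence `G = g • 1` with `g` invariant under all rotations, so
`g z = h ‖z‖` for a smooth even `h`.

It remains to write an even smooth `h` as `ψ (x ^ 2)` with `ψ` smooth. By Hadamard's lemma
`h' x = 2 x (D h) x` with `D h` again even and smooth, so `s ↦ (D^[j] h) (√s)` is the `j`-th
derivative of `s ↦ h √s` on `s > 0`. Borel's lemma gives a smooth `β` with `β⁽ʲ⁾ 0 = (D^[j] h) 0`;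
then `s ↦ h √s - β s`, extended by `0` to `s < 0`, has continuous derivatives of all orders, and
`ψ = (that function) + β`.
-/

open scoped ContDiff Nat Topology

theorem contDiff_infty_of_hasDerivAt_succ {𝕜 F : Type*} [NontriviallyNormedField 𝕜]
    [NormedAddCommGroup F] [NormedSpace 𝕜 F] (D : ℕ → 𝕜 → F)
    (hD : ∀ j x, HasDerivAt (D j) (D (j + 1) x) x) : ContDiff 𝕜 ∞ (D 0) := by
  have hderiv (j : ℕ) : deriv (D j) = D (j + 1) := funext fun x => (hD j x).deriv
  suffices ∀ n : ℕ, ∀ j, ContDiff 𝕜 n (D j) from contDiff_infty.2 fun n => this n 0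
  intro n
  induction n with
  | zero => exact fun j => contDiff_zero.2 <| continuous_iff_continuousAt.2 fun x =>
      (hD j x).continuousAt
  | succ n ih =>
    intro j
    rw [Nat.cast_succ, contDiff_succ_iff_deriv, hderiv]
    exact ⟨fun x => (hD j x).differentiableAt, by simp, ih (j + 1)⟩

noncomputable def scaledIntegral (k : ℕ) (g : ℝ → ℝ) (x : ℝ) : ℝ :=
  ∫ t in (0 : ℝ)..1, t ^ k * g (t * x)

theorem hasDerivAt_scaledIntegral (k : ℕ) {g : ℝ → ℝ} (hg : ContDiff ℝ 1 g) (x₀ : ℝ) :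
    HasDerivAt (scaledIntegral k g) (scaledIntegral (k + 1) (deriv g) x₀) x₀ := by
  have hg' : Continuous (deriv g) := hg.continuous_deriv le_rfl
  obtain ⟨M, hM⟩ := (isCompact_closedBall (0 : ℝ) (|x₀| + 1)).exists_bound_of_continuousOn
    hg'.continuousOn
  have key := intervalIntegral.hasDerivAt_integral_of_dominated_loc_of_deriv_le
    (F := fun x t => t ^ k * g (t * x)) (F' := fun x t => t ^ (k + 1) * deriv g (t * x))
    (bound := fun _ => M) (a := 0) (b := 1) (μ := MeasureTheory.volume)
    (Metric.ball_mem_nhds x₀ one_pos) ?_ ?_ ?_ ?_ intervalIntegrable_const ?_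
  · exact key.2
  · exact .of_forall fun x =>
      (by fun_prop : Continuous fun t : ℝ => t ^ k * g (t * x)).aestronglyMeasurable
  · exact (by fun_prop : Continuous fun t : ℝ => t ^ k * g (t * x₀)).intervalIntegrable 0 1
  · exact (by fun_prop : Continuous fun t : ℝ => t ^ (k + 1) * deriv g (t * x₀))
      |>.aestronglyMeasurable
  · refine .of_forall fun t ht x hx => ?_
    rw [Set.uIoc_of_le zero_le_one] at ht
    have ht0 : |t| ≤ 1 := abs_le.2 ⟨by linarith [ht.1], ht.2⟩
    have hx : |x| ≤ |x₀| + 1 := by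
      have := abs_sub_abs_le_abs_sub x x₀
      rw [Metric.mem_ball, Real.dist_eq] at hx
      linarith
    have htx : t * x ∈ Metric.closedBall (0 : ℝ) (|x₀| + 1) := by
      rw [mem_closedBall_zero_iff, Real.norm_eq_abs, abs_mul]
      nlinarith [abs_nonneg t, abs_nonneg x]
    calc ‖t ^ (k + 1) * deriv g (t * x)‖ = |t| ^ (k + 1) * ‖deriv g (t * x)‖ := by
          rw [norm_mul, norm_pow, Real.norm_eq_abs]
      _ ≤ 1 * M := mul_le_mul (pow_le_one₀ (abs_nonneg t) ht0) (hM _ htx) (norm_nonneg _)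
          zero_le_one
      _ = M := one_mul M
  · refine .of_forall fun t _ x _ => ?_
    have hscale : HasDerivAt (fun y => t * y) t x := by
      simpa using (hasDerivAt_id x).const_mul t
    rw [show t ^ (k + 1) * deriv g (t * x) = t ^ k * (deriv g (t * x) * t) by ring]
    exact ((hg.differentiable one_ne_zero (t * x)).hasDerivAt.comp x hscale).const_mul (t ^ k)

theorem contDiff_scaledIntegral (k : ℕ) {g : ℝ → ℝ} (hg : ContDiff ℝ ∞ g) :
    ContDiff ℝ ∞ (scaledIntegral k g) :=
  contDiff_infty_of_hasDerivAt_succ (fun j => scaledIntegral (k + j) (deriv^[j] g)) fun j x => by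
    rw [Function.iterate_succ_apply']
    exact hasDerivAt_scaledIntegral (k + j) ((hg.iterate_deriv j).of_le (by simp)) x

theorem mul_scaledIntegral_zero_deriv {f : ℝ → ℝ} (hf : ContDiff ℝ 1 f) (x : ℝ) :
    x * scaledIntegral 0 (deriv f) x = f x - f 0 := by
  have := intervalIntegral.smul_integral_comp_mul_right (a := 0) (b := 1) (deriv f) x
  simp only [zero_mul, one_mul, smul_eq_mul] at this
  simp only [scaledIntegral, pow_zero, one_mul]
  rw [this, intervalIntegral.integral_deriv_eq_sub
    (fun y _ => hf.differentiable one_ne_zero y)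
    ((hf.continuous_deriv le_rfl).intervalIntegrable _ _)]

theorem scaledIntegral_neg (k : ℕ) {g : ℝ → ℝ} (hg : Function.Even g) (x : ℝ) :
    scaledIntegral k g (-x) = scaledIntegral k g x := by
  simp only [scaledIntegral, mul_neg, hg _]

theorem Function.Even.deriv {f : ℝ → ℝ} (hf : Function.Even f) : Function.Odd (deriv f) := by
  intro x
  have := deriv_comp_neg (f := f) (x := x)
  rw [show (fun x => f (-x)) = f from funext hf] at this
  rw [this, neg_neg]

theorem Function.Odd.deriv {f : ℝ → ℝ} (hf : Function.Odd f) : Function.Even (deriv f) := by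
  intro x
  have := deriv_comp_neg (f := f) (x := x)
  rw [show (fun x => f (-x)) = fun x => -f x from funext hf, deriv.fun_neg] at this
  linarith

/-- The derivative of `f` with respect to `x ^ 2`, i.e. `f' x / (2 x)`, in a form that is visibly
smooth at `0`. -/
noncomputable def derivSq (f : ℝ → ℝ) (x : ℝ) : ℝ :=
  scaledIntegral 0 (deriv (deriv f)) x / 2

theorem hasDerivAt_two_mul_derivSq {f : ℝ → ℝ} (hf : Function.Even f)
    (hf2 : ContDiff ℝ 2 f) (x : ℝ) : HasDerivAt f (2 * x * derivSq f x) x := by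
  have h := mul_scaledIntegral_zero_deriv (f := deriv f) (hf2.iterate_deriv' 1 1) x
  rw [hf.deriv.map_zero, sub_zero] at h
  rw [show 2 * x * derivSq f x = deriv f x by rw [derivSq, ← h]; ring]
  exact (hf2.differentiable two_ne_zero x).hasDerivAt

theorem ContDiff.derivSq {f : ℝ → ℝ} (hf : ContDiff ℝ ∞ f) : ContDiff ℝ ∞ (derivSq f) :=
  (contDiff_scaledIntegral 0 (hf.iterate_deriv 2)).div_const 2

theorem Function.Even.derivSq {f : ℝ → ℝ} (hf : Function.Even f) : Function.Even (derivSq f) :=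
  fun x => congrArg (· / 2) (scaledIntegral_neg 0 hf.deriv.deriv x)

theorem iteratedDeriv_tsum_apply {𝕜 F ι : Type*} [RCLike 𝕜]
    [NormedAddCommGroup F] [NormedSpace 𝕜 F] [CompleteSpace F] {N : ℕ∞} {f : ι → 𝕜 → F}
    {v : ℕ → ι → ℝ} (hf : ∀ i, ContDiff 𝕜 N (f i)) (hv : ∀ k : ℕ, k ≤ N → Summable (v k))
    (hfv : ∀ (k : ℕ) (i : ι) (x : 𝕜), k ≤ N → ‖iteratedFDeriv 𝕜 k (f i) x‖ ≤ v k i) {k : ℕ}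
    (hk : k ≤ N) (x : 𝕜) :
    iteratedDeriv k (fun y => ∑' i, f i y) x = ∑' i, iteratedDeriv k (f i) x := by
  simp only [iteratedDeriv_eq_iteratedFDeriv]
  rw [iteratedFDeriv_tsum_apply hf hv hfv hk, ContinuousMultilinearMap.tsum_eval]
  exact .of_norm_bounded (hv k hk) fun i => hfv k i x hk

theorem norm_iteratedDeriv_const_mul_comp_mul_le {g : ℝ → ℝ} {k : ℕ} (hg : ContDiff ℝ k g)
    {M : ℝ} (hM : ∀ u, ‖iteratedDeriv k g u‖ ≤ M) (c r x : ℝ) :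
    ‖iteratedDeriv k (fun x => c * g (r * x)) x‖ ≤ |c| * |r| ^ k * M := by
  rw [iteratedDeriv_const_mul_field, iteratedDeriv_comp_const_mul hg, norm_mul, norm_mul,
    norm_pow, Real.norm_eq_abs, Real.norm_eq_abs, mul_assoc]
  exact mul_le_mul_of_nonneg_left (mul_le_mul_of_nonneg_left (hM _) (by positivity))
    (abs_nonneg c)

section BumpMonomial

variable (χ : ContDiffBump (0 : ℝ))

noncomputable def bumpMonomial (i : ℕ) (u : ℝ) : ℝ := u ^ i * χ u

theorem contDiff_bumpMonomial (i : ℕ) : ContDiff ℝ ∞ (bumpMonomial χ i) :=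
  (contDiff_id.pow i).mul χ.contDiff

theorem exists_norm_iteratedDeriv_bumpMonomial_le (i k : ℕ) :
    ∃ M, ∀ u, ‖iteratedDeriv k (bumpMonomial χ i) u‖ ≤ M := by
  simp only [← norm_iteratedFDeriv_eq_norm_iteratedDeriv]
  exact ((contDiff_bumpMonomial χ i).continuous_iteratedFDeriv (by exact_mod_cast le_top))
    |>.bounded_above_of_compact_support (χ.hasCompactSupport.mul_left.iteratedFDeriv k)

theorem bumpMonomial_comp_mul_eventuallyEq {r : ℝ} (hr : 0 < r) (a : ℝ) (i : ℕ) :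
    (fun x => a / r ^ i * bumpMonomial χ i (r * x)) =ᶠ[𝓝 0] fun x => a * x ^ i := by
  have hχ : ∀ᶠ x in 𝓝 (0 : ℝ), χ (r * x) = 1 := by
    have : Filter.Tendsto (fun x : ℝ => r * x) (𝓝 0) (𝓝 0) := by
      simpa using (continuous_const_mul r).tendsto 0
    exact this.eventually χ.eventuallyEq_one
  filter_upwards [hχ] with x hx
  rw [bumpMonomial, hx, mul_one, mul_pow]
  field_simp

theorem iteratedDeriv_bumpMonomial_comp_mul_zero {r : ℝ} (hr : 0 < r) (a : ℝ) (i k : ℕ) :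
    iteratedDeriv k (fun x => a / r ^ i * bumpMonomial χ i (r * x)) 0 =
      if i = k then a * k ! else 0 := by
  rw [(bumpMonomial_comp_mul_eventuallyEq χ hr a i).iteratedDeriv_eq, iteratedDeriv_const_mul_field,
    iteratedDeriv_fun_pow_zero]
  split_ifs <;> simp_all

end BumpMonomial

theorem abs_div_pow_mul_pow_mul_le_half_pow {a r M S : ℝ} {i k : ℕ} (hki : k < i) (hr : 1 ≤ r)
    (hM : 0 ≤ M) (hMS : M ≤ S) (hrS : 2 ^ i * |a| * S ≤ r) :
    |a / r ^ i| * r ^ k * M ≤ (1 / 2) ^ i := by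
  have hr0 : 0 < r := one_pos.trans_le hr
  have hpow : r ^ k * r ≤ r ^ i := by
    rw [← pow_succ]
    exact pow_le_pow_right₀ hr hki
  have hquot : r ^ k / r ^ i ≤ 1 / r := by
    rw [div_le_div_iff₀ (pow_pos hr0 i) hr0]
    linarith
  calc |a / r ^ i| * r ^ k * M = |a| * M * (r ^ k / r ^ i) := by
        rw [abs_div, abs_of_pos (pow_pos hr0 i)]; ring
    _ ≤ |a| * S * (1 / r) := by
        have hS : 0 ≤ S := hM.trans hMS
        gcongr
    _ ≤ (1 / 2) ^ i := by
        have hhalf : (1 / 2 : ℝ) ^ i * 2 ^ i = 1 := by rw [← mul_pow]; norm_num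
        rw [mul_one_div, div_le_iff₀ hr0]
        calc |a| * S = (1 / 2) ^ i * (2 ^ i * |a| * S) := by
              linear_combination (-(|a| * S)) * hhalf
          _ ≤ (1 / 2) ^ i * r := by gcongr

theorem summable_ite_lt_half_pow (k : ℕ) (w : ℕ → ℝ) :
    Summable fun i => if k < i then (1 / 2 : ℝ) ^ i else w i := by
  have htail : (fun n => if k < n + (k + 1) then (1 / 2 : ℝ) ^ (n + (k + 1)) else w (n + (k + 1)))
      = fun n => (1 / 2) ^ (n + (k + 1)) :=
    funext fun n => if_pos (by omega)
  rw [← summable_nat_add_iff (k + 1), htail, summable_nat_add_iff (k + 1)]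
  exact summable_geometric_two

theorem exists_contDiff_iteratedDeriv_zero_eq (b : ℕ → ℝ) :
    ∃ β : ℝ → ℝ, ContDiff ℝ ∞ β ∧ ∀ k, iteratedDeriv k β 0 = b k := by
  let χ : ContDiffBump (0 : ℝ) := default
  choose M hM using exists_norm_iteratedDeriv_bumpMonomial_le χ
  have hM0 (i k : ℕ) : 0 ≤ M i k := (norm_nonneg _).trans (hM i k 0)
  let a (i : ℕ) : ℝ := b i / (i ! : ℝ)
  -- `r i` is large enough for the `k`-th derivative of the `i`-th term to be at most `2⁻ⁱ`, `k < i`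
  let r (i : ℕ) : ℝ := max 1 (2 ^ i * |a i| * ∑ k ∈ Finset.range i, M i k)
  have hr (i : ℕ) : 1 ≤ r i := le_max_left _ _
  have hr0 (i : ℕ) : 0 < r i := one_pos.trans_le (hr i)
  let f (i : ℕ) (x : ℝ) : ℝ := a i / r i ^ i * bumpMonomial χ i (r i * x)
  have hf (i : ℕ) : ContDiff ℝ ∞ (f i) :=
    contDiff_const.mul ((contDiff_bumpMonomial χ i).comp (contDiff_const.mul contDiff_id))
  let v (k i : ℕ) : ℝ := if k < i then (1 / 2) ^ i else |a i / r i ^ i| * r i ^ k * M i k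
  have hfv (k i : ℕ) (x : ℝ) : ‖iteratedDeriv k (f i) x‖ ≤ v k i := by
    have h := norm_iteratedDeriv_const_mul_comp_mul_le
      ((contDiff_bumpMonomial χ i).of_le (by exact_mod_cast le_top)) (hM i k)
      (a i / r i ^ i) (r i) x
    rw [abs_of_pos (hr0 i)] at h
    simp only [v]
    split_ifs with hki
    · exact h.trans (abs_div_pow_mul_pow_mul_le_half_pow hki (hr i) (hM0 i k)
        (Finset.single_le_sum (fun k _ => hM0 i k) (Finset.mem_range.2 hki)) (le_max_right _ _))
    · exact h
  have hv (k : ℕ) : Summable (v k) := summable_ite_lt_half_pow k _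
  have hfv' (k : ℕ) (i : ℕ) (x : ℝ) (_ : (k : ℕ∞) ≤ ⊤) : ‖iteratedFDeriv ℝ k (f i) x‖ ≤ v k i := by
    rw [norm_iteratedFDeriv_eq_norm_iteratedDeriv]; exact hfv k i x
  refine ⟨fun x => ∑' i, f i x, contDiff_tsum hf (fun k _ => hv k) hfv', fun k => ?_⟩
  rw [iteratedDeriv_tsum_apply hf (fun k _ => hv k) hfv' le_top]
  simp only [f, iteratedDeriv_bumpMonomial_comp_mul_zero χ (hr0 _)]
  rw [tsum_ite_eq]
  exact div_mul_cancel₀ (b k) (Nat.cast_ne_zero.2 k.factorial_ne_zero)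

theorem hasDerivAt_comp_sqrt_sub_comp_max {E E' B B' : ℝ → ℝ}
    (hE : ∀ x, HasDerivAt E (2 * x * E' x) x) (hE' : Continuous E')
    (hB : ∀ s, HasDerivAt B (B' s) s) (hB' : Continuous B') (h0 : E' 0 = B' 0) (s : ℝ) :
    HasDerivAt (fun s => E √s - B (max s 0)) (E' √s - B' (max s 0)) s := by
  have off_zero : ∀ s ≠ 0,
      HasDerivAt (fun s => E √s - B (max s 0)) (E' √s - B' (max s 0)) s := by
    intro s hs
    rcases hs.lt_or_gt with hneg | hpos
    · have hconst : (fun s => E √s - B (max s 0)) =ᶠ[𝓝 s] fun _ => E 0 - B 0 := by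
        filter_upwards [Iio_mem_nhds hneg] with t ht
        rw [Real.sqrt_eq_zero'.2 ht.le, max_eq_right ht.le]
      rw [Real.sqrt_eq_zero'.2 hneg.le, max_eq_right hneg.le, h0, sub_self]
      exact (hasDerivAt_const s _).congr_of_eventuallyEq hconst
    · have hsqrt : HasDerivAt (fun s => E √s) (E' √s) s := by
        have := (hE √s).comp s (Real.hasDerivAt_sqrt hpos.ne')
        rwa [show 2 * √s * E' √s * (1 / (2 * √s)) = E' √s by
          field_simp [(Real.sqrt_pos.2 hpos).ne']] at this
      have hmax : (fun s => E √s - B (max s 0)) =ᶠ[𝓝 s] fun s => E √s - B s := by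
        filter_upwards [Ioi_mem_nhds hpos] with t ht
        rw [max_eq_left ht.le]
      rw [max_eq_left hpos.le]
      exact (hsqrt.sub (hB s)).congr_of_eventuallyEq hmax
  rcases eq_or_ne s 0 with rfl | hs
  · have hEc : Continuous E := continuous_iff_continuousAt.2 fun x => (hE x).continuousAt
    have hBc : Continuous B := continuous_iff_continuousAt.2 fun x => (hB x).continuousAt
    exact hasDerivAt_of_hasDerivAt_of_ne off_zero (by fun_prop) (by fun_prop)
  · exact off_zero s hs

theorem exists_contDiff_comp_sq_of_even {h : ℝ → ℝ} (he : Function.Even h)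
    (hh : ContDiff ℝ ∞ h) : ∃ ψ : ℝ → ℝ, ContDiff ℝ ∞ ψ ∧ ∀ x, h x = ψ (x ^ 2) := by
  set e : ℕ → ℝ → ℝ := fun j => derivSq^[j] h
  have he_succ (j : ℕ) : e (j + 1) = derivSq (e j) := Function.iterate_succ_apply' ..
  have he_smooth_even (j : ℕ) : ContDiff ℝ ∞ (e j) ∧ Function.Even (e j) := by
    induction j with
    | zero => exact ⟨hh, he⟩
    | succ j ih => rw [he_succ]; exact ⟨ih.1.derivSq, ih.2.derivSq⟩
  obtain ⟨β, hβ, hβ0⟩ := exists_contDiff_iteratedDeriv_zero_eq fun j => e j 0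
  simp only [iteratedDeriv_eq_iterate] at hβ0
  -- for `s < 0`, `Φ j s = e j 0 - β⁽ʲ⁾ 0 = 0`, so `Φ 0` is `s ↦ h √s - β s` glued to `0`
  let Φ : ℕ → ℝ → ℝ := fun j s => e j √s - deriv^[j] β (max s 0)
  have hΦ : ContDiff ℝ ∞ (Φ 0) := contDiff_infty_of_hasDerivAt_succ Φ fun j s => by
    refine hasDerivAt_comp_sqrt_sub_comp_max (fun x => ?_) (he_smooth_even (j + 1)).1.continuous
      (fun s => ?_) (hβ.iterate_deriv (j + 1)).continuous (hβ0 (j + 1)).symm s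
    · rw [he_succ]
      exact hasDerivAt_two_mul_derivSq (he_smooth_even j).2
        ((he_smooth_even j).1.of_le (by decide)) x
    · rw [Function.iterate_succ_apply']
      exact ((hβ.iterate_deriv j).differentiable (by simp) s).hasDerivAt
  refine ⟨fun s => Φ 0 s + β s, hΦ.add hβ, fun x => ?_⟩
  simp only [Φ, e, Function.iterate_zero, id, max_eq_left (sq_nonneg x), sub_add_cancel,
    Real.sqrt_sq_eq_abs]
  rcases abs_choice x with hx | hx <;> rw [hx]
  exact (he x).symm

theorem rotMat_mul_transpose (θ : ℝ) : rotMat θ * (rotMat θ)ᵀ = 1 := by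
  rw [eta_fin_two (rotMat θ * _), one_fin_two]
  simp [rotMat, Matrix.mul_apply, ← sq, mul_comm]

theorem eq_smul_one_of_rotMat_conj_eq {A : Matrix (Fin 2) (Fin 2) ℝ} (hA : A.IsSymm) {θ : ℝ}
    (hθ : Real.sin θ ≠ 0) (h : rotMat θ * A * (rotMat θ)ᵀ = A) : A = A 0 0 • 1 := by
  have h10 : A 1 0 = A 0 1 := hA.apply 0 1
  have h00 := congrFun₂ h 0 0
  have h01 := congrFun₂ h 0 1
  simp only [rotMat, cons_mul, empty_mul, Equiv.symm_apply_apply, Matrix.mul_apply, of_apply,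
    cons_val', vecMul, dotProduct, Fin.sum_univ_two, cons_val_zero, cons_val_one, cons_val_fin_one,
    neg_mul, transpose_apply, mul_neg] at h00 h01
  rw [h10] at h00 h01
  have hpyth := Real.sin_sq_add_cos_sq θ
  have hsq : Real.sin θ * A 0 1 = 0 := by
    linear_combination (-Real.cos θ / 2) * h00 - (Real.sin θ / 2) * h01 +
      ((Real.cos θ * A 0 0 - Real.sin θ * A 0 1) / 2) * hpyth
  have hspr : Real.sin θ ^ 2 * (A 0 0 - A 1 1) = 0 := by
    linear_combination -h00 + A 0 0 * hpyth - 2 * Real.cos θ * hsq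
  have hq : A 0 1 = 0 := (mul_eq_zero.1 hsq).resolve_left hθ
  have hpr : A 0 0 = A 1 1 := sub_eq_zero.1 ((mul_eq_zero.1 hspr).resolve_left (pow_ne_zero 2 hθ))
  rw [eta_fin_two A, one_fin_two]
  simp [hq, h10, hpr]

open Real in
theorem sin_nat_mul_two_pi_div_ne_zero {a d : ℕ} (ha : 0 < a) (h : ¬ a ∣ 2 * d) :
    sin (d * (2 * π / a)) ≠ 0 := by
  rw [Ne, sin_eq_zero_iff]
  rintro ⟨n, hn⟩
  have ha' : (a : ℝ) ≠ 0 := by positivity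
  have hna : ((2 * d : ℕ) : ℝ) = a * n := by
    field_simp at hn
    push_cast
    linear_combination -hn
  exact h (Int.natCast_dvd_natCast.1 ⟨n, by exact_mod_cast hna⟩)

theorem apply_eq_apply_norm_of_exp_mul_I_mul {α : Type*} {g : ℂ → α}
    (hg : ∀ (s : ℝ) (z : ℂ), g (Complex.exp (s * Complex.I) * z) = g z) (z : ℂ) :
    g z = g ‖z‖ := by
  conv_lhs => rw [← Complex.norm_mul_exp_arg_mul_I z, mul_comm]
  exact hg _ _

theorem equivariant_symmetric_matrix_is_even_multiple_of_id_general
    (a d : ℕ) (ha : 0 < a) (hndvd : ¬ a ∣ 2 * d)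
    (G : ℂ → Matrix (Fin 2) (Fin 2) ℝ)
    (hsmooth : ∀ i j : Fin 2, ContDiff ℝ (⊤ : ℕ∞) fun z => G z i j)
    (hsymm : ∀ z : ℂ, (G z).IsSymm)
    (hequiv : ∀ (θ : ℝ) (z : ℂ),
      G (Complex.exp ((a * θ : ℝ) * Complex.I) * z) =
        rotMat (d * θ) * G z * (rotMat (d * θ))ᵀ) :
    ∃ ψ : ℝ → ℝ, ContDiff ℝ (⊤ : ℕ∞) ψ ∧
      ∀ z : ℂ, G z = ψ (‖z‖ ^ 2) • (1 : Matrix (Fin 2) (Fin 2) ℝ) := by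
  have ha' : (a : ℝ) ≠ 0 := by positivity
  have hscalar (z : ℂ) : G z = G z 0 0 • 1 := by
    refine eq_smul_one_of_rotMat_conj_eq (hsymm z) (sin_nat_mul_two_pi_div_ne_zero ha hndvd) ?_
    have h := hequiv (2 * Real.pi / a) z
    rw [mul_div_cancel₀ _ ha', Complex.ofReal_mul, Complex.ofReal_ofNat,
      Complex.exp_two_pi_mul_I, one_mul] at h
    exact h.symm
  have hinv (s : ℝ) (z : ℂ) : G (Complex.exp (s * Complex.I) * z) = G z := by
    have h := hequiv (s / a) z
    rw [mul_div_cancel₀ _ ha', hscalar z, Matrix.mul_smul, Matrix.smul_mul, Matrix.mul_one,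
      rotMat_mul_transpose] at h
    rw [h, ← hscalar z]
  have heven : Function.Even fun x : ℝ => G x 0 0 := fun x => by
    simpa using congrFun₂ (hinv Real.pi x) 0 0
  obtain ⟨ψ, hψ, hGψ⟩ := exists_contDiff_comp_sq_of_even heven
    ((hsmooth 0 0).comp Complex.ofRealCLM.contDiff)
  refine ⟨ψ, hψ, fun z => ?_⟩
  rw [apply_eq_apply_norm_of_exp_mul_I_mul hinv z, hscalar, hGψ]

theorem equivariant_symmetric_matrix_is_even_multiple_of_id
    (a d : ℕ) (ha : 0 < a) (hd : 0 < d) (hndvd : ¬ a ∣ 2 * d)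
    (G : ℂ → Matrix (Fin 2) (Fin 2) ℝ)
    (hsmooth : ∀ i j : Fin 2, ContDiff ℝ (⊤ : ℕ∞) fun z => G z i j)
    (hsymm : ∀ z : ℂ, (G z).IsSymm)
    (hequiv : ∀ (θ : ℝ) (z : ℂ),
      G (Complex.exp ((a * θ : ℝ) * Complex.I) * z) =
        rotMat (d * θ) * G z * (rotMat (d * θ))ᵀ) :
    ∃ ψ : ℝ → ℝ, ContDiff ℝ (⊤ : ℕ∞) ψ ∧
      ∀ z : ℂ, G z = ψ (‖z‖ ^ 2) • (1 : Matrix (Fin 2) (Fin 2) ℝ) :=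
  equivariant_symmetric_matrix_is_even_multiple_of_id_general a d ha hndvd G hsmooth hsymm hequiv
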